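/- arXiv:2406.14074 — 2 statements merged into one kernel-verified Lean document; each statement's English description precedes it below -/
import Mathlib

section
/- Assume Condition (C) and let ε > 0. Then there exist δ ∈ (0,1) and κ > 0 such that for every u ∈ ℝ^N with nonnegative entries and every X ∈ ℝ^N, ⟨X, (J+δI)A^ε(u)X⟩ ≥ κ‖X‖₂². -/
open Finset Matrix

/-!
Every column of `A^ε(u)` sums to one, so `J A^ε(u) = J` and the form is
`(Σ X)² + δ ⟨X, A^ε(u) X⟩`. With `S = ε + Σ f u` one has
`A^ε(u) = diag(B^ε(u)) + S⁻¹ (u f ⊗ 1 - u B^ε(u) ⊗ f)`. The diagonal part is at least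
`f_min / f_max`; splitting `f = f̄ + (f - f̄)` and applying Cauchy–Schwarz bounds the rank-two part
by `M |Σ X| ‖X‖ + (σ / f_min) ‖X‖²`, where `M = 1 + f̄ / f_min` and `σ = ‖f - f̄‖`. Condition (C) gives
`β(f) < 1`, hence `α = f_min / f_max - σ / f_min > 0`, and for small `δ` the quadratic
`t² + δ (α r² - M t r)` in `t = |Σ X|`, `r = ‖X‖` dominates `(δ α / 2) r²`.
-/

/-- `B^ε_n(u) = (ε + f(n) Σ_k u_k) / (ε + Σ_k f(k) u_k)`. -/
noncomputable def Bv (N : ℕ) (f : Fin N → ℝ) (ε : ℝ) (u : Fin N → ℝ) (n : Fin N) : ℝ :=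
  (ε + f n * ∑ k, u k) / (ε + ∑ k, f k * u k)

/-- The matrix `A^ε(u)`. -/
noncomputable def Amat (N : ℕ) (f : Fin N → ℝ) (ε : ℝ) (u : Fin N → ℝ) :
    Matrix (Fin N) (Fin N) ℝ :=
  Matrix.of fun n k =>
    if n = k then
      Bv N f ε u n + u n * (f n * ∑ l, (f l - f n) * u l) / (ε + ∑ l, f l * u l) ^ 2
    else
      u n * (ε * (f n - f k) + f n * ∑ l, (f l - f k) * u l) / (ε + ∑ l, f l * u l) ^ 2

/-- `f_max`. -/
noncomputable def fmax (N : ℕ) (f : Fin N → ℝ) : ℝ := ⨆ n, f n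

/-- `f_min`. -/
noncomputable def fmin (N : ℕ) (f : Fin N → ℝ) : ℝ := ⨅ n, f n

/-- `f̄ = (1/N) Σ_n f(n)`. -/
noncomputable def fbar (N : ℕ) (f : Fin N → ℝ) : ℝ := (∑ n, f n) / N

/-- `β(f) = (f_max − f_min)/f_min + (1/f_min)√(Σ_n (f(n) − f̄)²)`. -/
noncomputable def betaf (N : ℕ) (f : Fin N → ℝ) : ℝ :=
  (fmax N f - fmin N f) / fmin N f +
    (1 / fmin N f) * Real.sqrt (∑ n, (f n - fbar N f) ^ 2)

/-- `κ₀ = (1/2)[N + 1 − max_k √((Σ_{n≠k} f(n))(Σ_{n≠k} 1/f(n)))]`. -/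
noncomputable def kappa0 (N : ℕ) (f : Fin N → ℝ) : ℝ :=
  (1 / 2) * (N + 1 -
    ⨆ k : Fin N, Real.sqrt ((∑ n ∈ univ.erase k, f n) * ∑ n ∈ univ.erase k, (f n)⁻¹))


/-- The all-ones matrix `J`. -/
def Jmat (N : ℕ) : Matrix (Fin N) (Fin N) ℝ := Matrix.of fun _ _ => (1 : ℝ)

section Sums

variable {ι : Type*} [Fintype ι]

lemma abs_sum_mul_le_sqrt_mul_sqrt (a X : ι → ℝ) :
    |∑ i, a i * X i| ≤ √(∑ i, a i ^ 2) * √(∑ i, X i ^ 2) := by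
  rw [← Real.sqrt_mul (sum_nonneg fun i _ => sq_nonneg (a i))]
  exact Real.abs_le_sqrt (sum_mul_sq_le_sq_mul_sq _ a X)

lemma abs_sum_mul_le_sum_mul_sqrt {w : ι → ℝ} (hw : ∀ i, 0 ≤ w i) (X : ι → ℝ) :
    |∑ i, w i * X i| ≤ (∑ i, w i) * √(∑ i, X i ^ 2) := by
  rw [sum_mul]
  refine (abs_sum_le_sum_abs _ _).trans (sum_le_sum fun i _ => ?_)
  rw [abs_mul, abs_of_nonneg (hw i)]
  exact mul_le_mul_of_nonneg_left
    (Real.abs_le_sqrt (single_le_sum (fun j _ => sq_nonneg (X j)) (mem_univ i))) (hw i)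

lemma abs_sum_mul_le_abs_mul_add_sqrt_mul_sqrt (f X : ι → ℝ) (c : ℝ) :
    |∑ i, f i * X i| ≤ |c| * |∑ i, X i| + √(∑ i, (f i - c) ^ 2) * √(∑ i, X i ^ 2) := by
  have hsplit : ∑ i, f i * X i = c * ∑ i, X i + ∑ i, (f i - c) * X i := by
    rw [mul_sum, ← sum_add_distrib]
    exact sum_congr rfl fun i _ => by ring
  rw [hsplit, ← abs_mul]
  exact (abs_add_le _ _).trans (add_le_add_right (abs_sum_mul_le_sqrt_mul_sqrt _ _) _)

end Sums

lemma mul_sq_le_sq_add_mul_sub {α M δ : ℝ} (hδ : 0 ≤ δ) (hδM : δ * M ^ 2 ≤ 2 * α) (t r : ℝ) :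
    δ * α / 2 * r ^ 2 ≤ t ^ 2 + δ * (α * r ^ 2 - M * t * r) := by
  nlinarith [sq_nonneg (t - δ * M * r / 2),
    mul_nonneg hδ (mul_nonneg (sub_nonneg.2 hδM) (sq_nonneg r))]

section Amat

variable {N : ℕ} {f : Fin N → ℝ} {ε : ℝ} {u : Fin N → ℝ}

lemma Amat_apply_of_ne_zero (hS : ε + ∑ l, f l * u l ≠ 0) (n k : Fin N) :
    Amat N f ε u n k = (if n = k then Bv N f ε u n else 0)
      + u n * (f n - Bv N f ε u n * f k) / (ε + ∑ l, f l * u l) := by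
  have hsum (c : ℝ) : ∑ l, (f l - c) * u l = ∑ l, f l * u l - c * ∑ l, u l := by
    simp only [sub_mul, sum_sub_distrib, mul_sum]
  rcases eq_or_ne n k with rfl | h
  · simp only [Amat, Bv, of_apply, if_true, hsum]
    field_simp
    ring
  · simp only [Amat, Bv, of_apply, if_neg h, hsum, zero_add]
    field_simp
    ring

lemma sum_mul_Bv (hS : ε + ∑ l, f l * u l ≠ 0) : ∑ n, u n * Bv N f ε u n = ∑ n, u n := by
  have hterm (n : Fin N) : u n * Bv N f ε u n
      = (ε * u n + (∑ k, u k) * (f n * u n)) / (ε + ∑ l, f l * u l) := by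
    rw [Bv]
    ring
  rw [sum_congr rfl fun n _ => hterm n, ← sum_div, sum_add_distrib, ← mul_sum, ← mul_sum,
    div_eq_iff hS]
  ring

lemma sum_Amat_apply (hS : ε + ∑ l, f l * u l ≠ 0) (k : Fin N) : ∑ n, Amat N f ε u n k = 1 := by
  simp only [Amat_apply_of_ne_zero hS, sum_add_distrib, sum_ite_eq', mem_univ, if_true,
    ← sum_div, mul_sub, sum_sub_distrib, ← mul_assoc, ← sum_mul, sum_mul_Bv hS]
  rw [Bv]
  field_simp
  simp only [mul_comm (u _)]
  ring

lemma Jmat_mul_Amat (hS : ε + ∑ l, f l * u l ≠ 0) : Jmat N * Amat N f ε u = Jmat N := by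
  ext i k
  simp [Jmat, mul_apply, sum_Amat_apply hS]

lemma mulVec_Amat_apply (hS : ε + ∑ l, f l * u l ≠ 0) (X : Fin N → ℝ) (n : Fin N) :
    (Amat N f ε u *ᵥ X) n = Bv N f ε u n * X n
      + u n * (f n * ∑ k, X k - Bv N f ε u n * ∑ k, f k * X k) / (ε + ∑ l, f l * u l) := by
  have hterm (k : Fin N) : Amat N f ε u n k * X k
      = (if n = k then Bv N f ε u n * X k else 0) + u n * f n / (ε + ∑ l, f l * u l) * X k
        - u n * Bv N f ε u n / (ε + ∑ l, f l * u l) * (f k * X k) := by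
    rw [Amat_apply_of_ne_zero hS]
    split_ifs <;> ring
  simp only [mulVec, dotProduct, hterm, sum_sub_distrib, sum_add_distrib, sum_ite_eq, mem_univ,
    if_true, ← mul_sum]
  ring

lemma dotProduct_Amat_mulVec (hS : ε + ∑ l, f l * u l ≠ 0) (X : Fin N → ℝ) :
    X ⬝ᵥ (Amat N f ε u *ᵥ X) = ∑ n, Bv N f ε u n * X n ^ 2
      + ((∑ n, X n) * ∑ n, u n * f n * X n
        - (∑ n, f n * X n) * ∑ n, u n * Bv N f ε u n * X n) / (ε + ∑ l, f l * u l) := by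
  have hterm (n : Fin N) : X n * (Amat N f ε u *ᵥ X) n
      = Bv N f ε u n * X n ^ 2 + (∑ k, X k) / (ε + ∑ l, f l * u l) * (u n * f n * X n)
        - (∑ k, f k * X k) / (ε + ∑ l, f l * u l) * (u n * Bv N f ε u n * X n) := by
    rw [mulVec_Amat_apply hS]
    ring
  simp only [dotProduct, hterm, sum_sub_distrib, sum_add_distrib, ← mul_sum]
  ring

lemma dotProduct_Jmat_mulVec (X : Fin N → ℝ) : X ⬝ᵥ (Jmat N *ᵥ X) = (∑ n, X n) ^ 2 := by
  simp only [dotProduct, mulVec, Jmat, of_apply, one_mul, ← sum_mul]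
  ring

lemma dotProduct_Jmat_add_smul_one_mul_Amat_mulVec (hS : ε + ∑ l, f l * u l ≠ 0)
    (δ : ℝ) (X : Fin N → ℝ) :
    X ⬝ᵥ (((Jmat N + δ • (1 : Matrix (Fin N) (Fin N) ℝ)) * Amat N f ε u) *ᵥ X)
      = (∑ n, X n) ^ 2 + δ * (X ⬝ᵥ (Amat N f ε u *ᵥ X)) := by
  rw [add_mul, Jmat_mul_Amat hS, smul_mul, one_mul, add_mulVec, smul_mulVec, dotProduct_add,
    dotProduct_smul, smul_eq_mul, dotProduct_Jmat_mulVec]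

lemma div_le_Bv {m M : ℝ} (hm : 0 < m) (hmf : ∀ n, m ≤ f n) (hfM : ∀ n, f n ≤ M)
    (hε : 0 ≤ ε) (hu : ∀ n, 0 ≤ u n) (hS : 0 < ε + ∑ l, f l * u l) (n : Fin N) :
    m / M ≤ Bv N f ε u n := by
  have hM : 0 < M := hm.trans_le ((hmf n).trans (hfM n))
  have hFM : ∑ l, f l * u l ≤ M * ∑ l, u l := by
    rw [mul_sum]
    exact sum_le_sum fun l _ => mul_le_mul_of_nonneg_right (hfM l) (hu l)
  have hU : 0 ≤ ∑ l, u l := sum_nonneg fun l _ => hu l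
  rw [Bv, div_le_div_iff₀ hM hS]
  nlinarith [mul_le_mul_of_nonneg_left hFM hm.le, mul_le_mul_of_nonneg_right (hmf n) hU,
    mul_le_mul_of_nonneg_right ((hmf n).trans (hfM n)) hε]

lemma div_mul_sum_sq_le_sum_Bv_mul_sq {m M : ℝ} (hm : 0 < m) (hmf : ∀ n, m ≤ f n)
    (hfM : ∀ n, f n ≤ M) (hε : 0 ≤ ε) (hu : ∀ n, 0 ≤ u n) (hS : 0 < ε + ∑ l, f l * u l)
    (X : Fin N → ℝ) :
    m / M * ∑ n, X n ^ 2 ≤ ∑ n, Bv N f ε u n * X n ^ 2 := by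
  rw [mul_sum]
  exact sum_le_sum fun n _ =>
    mul_le_mul_of_nonneg_right (div_le_Bv hm hmf hfM hε hu hS n) (sq_nonneg _)

lemma abs_sum_mul_f_mul_le (hf : ∀ n, 0 ≤ f n) (hε : 0 ≤ ε) (hu : ∀ n, 0 ≤ u n)
    (X : Fin N → ℝ) :
    |∑ n, u n * f n * X n| ≤ (ε + ∑ l, f l * u l) * √(∑ n, X n ^ 2) := by
  calc _ ≤ (∑ n, u n * f n) * √(∑ n, X n ^ 2) :=
        abs_sum_mul_le_sum_mul_sqrt (fun n => mul_nonneg (hu n) (hf n)) X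
    _ ≤ _ := by
        gcongr
        simp only [mul_comm (u _)]
        linarith

lemma mul_abs_sum_mul_Bv_mul_le {m : ℝ} (hm : 0 ≤ m) (hmf : ∀ n, m ≤ f n) (hε : 0 ≤ ε)
    (hu : ∀ n, 0 ≤ u n) (hS : 0 < ε + ∑ l, f l * u l) (X : Fin N → ℝ) :
    m * |∑ n, u n * Bv N f ε u n * X n| ≤ (ε + ∑ l, f l * u l) * √(∑ n, X n ^ 2) := by
  have hU : 0 ≤ ∑ l, u l := sum_nonneg fun l _ => hu l
  have huB (n : Fin N) : 0 ≤ u n * Bv N f ε u n :=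
    mul_nonneg (hu n) (div_nonneg (by nlinarith [hmf n]) hS.le)
  have hmU : ∑ n, m * u n ≤ ∑ n, f n * u n :=
    sum_le_sum fun n _ => mul_le_mul_of_nonneg_right (hmf n) (hu n)
  calc _ ≤ m * ((∑ n, u n) * √(∑ n, X n ^ 2)) := by
        gcongr
        simpa only [sum_mul_Bv hS.ne'] using abs_sum_mul_le_sum_mul_sqrt huB X
    _ = (∑ n, m * u n) * √(∑ n, X n ^ 2) := by rw [← mul_sum]; ring
    _ ≤ _ := by
        gcongr
        linarith

theorem dotProduct_Amat_mulVec_ge {m M : ℝ} (c : ℝ) (hm : 0 < m) (hmf : ∀ n, m ≤ f n)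
    (hfM : ∀ n, f n ≤ M) (hε : 0 ≤ ε) (hu : ∀ n, 0 ≤ u n) (hS : 0 < ε + ∑ l, f l * u l)
    (X : Fin N → ℝ) :
    (m / M - √(∑ n, (f n - c) ^ 2) / m) * √(∑ n, X n ^ 2) ^ 2
      - (1 + |c| / m) * |∑ n, X n| * √(∑ n, X n ^ 2) ≤ X ⬝ᵥ (Amat N f ε u *ᵥ X) := by
  have hdiag := div_mul_sum_sq_le_sum_Bv_mul_sq hm hmf hfM hε hu hS X
  have hP := abs_sum_mul_f_mul_le (fun n => hm.le.trans (hmf n)) hε hu X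
  have hQ := mul_abs_sum_mul_Bv_mul_le hm.le hmf hε hu hS X
  have hW := abs_sum_mul_le_abs_mul_add_sqrt_mul_sqrt f X c
  rw [dotProduct_Amat_mulVec hS.ne']
  rw [← Real.sq_sqrt (sum_nonneg fun n _ => sq_nonneg (X n))] at hdiag
  set S := ε + ∑ l, f l * u l
  set r := √(∑ n, X n ^ 2)
  set Y := ∑ n, X n
  set P := ∑ n, u n * f n * X n
  set Q := ∑ n, u n * Bv N f ε u n * X n
  set W := ∑ n, f n * X n
  set σ := √(∑ n, (f n - c) ^ 2)
  have hr : 0 ≤ r := Real.sqrt_nonneg _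
  have hσ : 0 ≤ σ := Real.sqrt_nonneg _
  have hQ' : |Q| ≤ S * r / m := by
    rw [le_div_iff₀ hm]
    linarith
  have hcross : |Y * P - W * Q| ≤ S * (|Y| * r + (|c| * |Y| + σ * r) * (r / m)) := by
    calc |Y * P - W * Q| ≤ |Y| * |P| + |W| * |Q| := by
          rw [← abs_mul, ← abs_mul]
          exact abs_sub _ _
      _ ≤ |Y| * (S * r) + (|c| * |Y| + σ * r) * (S * r / m) := by gcongr
      _ = _ := by ring
  have hfrac : -(|Y| * r + (|c| * |Y| + σ * r) * (r / m)) ≤ (Y * P - W * Q) / S := by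
    rw [le_div_iff₀ hS]
    linarith [neg_abs_le (Y * P - W * Q)]
  have hsplit : (m / M - σ / m) * r ^ 2 - (1 + |c| / m) * |Y| * r
      = m / M * r ^ 2 - (|Y| * r + (|c| * |Y| + σ * r) * (r / m)) := by ring
  linarith

end Amat

section Extrema

variable {N : ℕ} (f : Fin N → ℝ)

lemma fmin_le (n : Fin N) : fmin N f ≤ f n := ciInf_le (Set.finite_range f).bddBelow n

lemma le_fmax (n : Fin N) : f n ≤ fmax N f := le_ciSup (Set.finite_range f).bddAbove n

variable [Nonempty (Fin N)] {f}

lemma fmin_pos (hf : ∀ n, 0 < f n) : 0 < fmin N f := by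
  obtain ⟨n, hn⟩ := exists_eq_ciInf_of_finite (f := f)
  rw [fmin, ← hn]
  exact hf n

lemma sqrt_div_fmin_lt_fmin_div_fmax (hf : ∀ n, 0 < f n) (hβ : betaf N f < 1) :
    √(∑ n, (f n - fbar N f) ^ 2) / fmin N f < fmin N f / fmax N f := by
  have hm := fmin_pos hf
  have hM : 0 < fmax N f := hm.trans_le ((fmin_le f (Classical.arbitrary _)).trans (le_fmax f _))
  have hβ' : fmax N f - fmin N f + √(∑ n, (f n - fbar N f) ^ 2) < fmin N f := by
    rw [betaf, one_div_mul_eq_div, ← add_div, div_lt_one hm] at hβ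
    exact hβ
  -- `σ < 2 f_min - f_max` and `(2 f_min - f_max) f_max ≤ f_min²`
  rw [div_lt_div_iff₀ hm hM]
  nlinarith [sq_nonneg (fmin N f - fmax N f)]

end Extrema

/-- Under Condition (C) and for `ε > 0`, there exist `δ ∈ (0,1)` and `κ > 0` such that
`⟨X, (J+δI)A^ε(u)X⟩ ≥ κ‖X‖₂²` for all nonnegative `u` and all `X`. -/
theorem exists_delta_coercive (N : ℕ) (hN : 2 ≤ N) (f : Fin N → ℝ) (hf : ∀ n, 0 < f n)
    (hC : min (kappa0 N f) 1 > betaf N f) (ε : ℝ) (hε : 0 < ε) :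
    ∃ δ : ℝ, δ ∈ Set.Ioo (0 : ℝ) 1 ∧
      ∃ κ : ℝ, 0 < κ ∧ ∀ u X : Fin N → ℝ, (∀ n, 0 ≤ u n) →
        X ⬝ᵥ (((Jmat N + δ • (1 : Matrix (Fin N) (Fin N) ℝ)) * Amat N f ε u) *ᵥ X) ≥
          κ * ∑ n, (X n) ^ 2 := by
  have : Nonempty (Fin N) := ⟨⟨0, by omega⟩⟩
  have hm := fmin_pos hf
  set α := fmin N f / fmax N f - √(∑ n, (f n - fbar N f) ^ 2) / fmin N f
  set M := 1 + |fbar N f| / fmin N f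
  have hα : 0 < α :=
    sub_pos.2 (sqrt_div_fmin_lt_fmin_div_fmax hf (hC.trans_le (min_le_right _ _)))
  set δ := min (1 / 2) (α / M ^ 2)
  have hδ : δ ∈ Set.Ioo (0 : ℝ) 1 := ⟨by positivity, (min_le_left _ _).trans_lt (by norm_num)⟩
  have hδM : δ * M ^ 2 ≤ 2 * α := by
    calc δ * M ^ 2 ≤ α / M ^ 2 * M ^ 2 := by gcongr; exact min_le_right _ _
      _ = α := div_mul_cancel₀ _ (by positivity)
      _ ≤ 2 * α := by linarith
  refine ⟨δ, hδ, δ * α / 2, half_pos (mul_pos hδ.1 hα), fun u X hu => ?_⟩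
  have hS : 0 < ε + ∑ l, f l * u l :=
    add_pos_of_pos_of_nonneg hε (sum_nonneg fun l _ => mul_nonneg (hf l).le (hu l))
  have hA := dotProduct_Amat_mulVec_ge (fbar N f) hm (fmin_le f) (le_fmax f) hε.le hu hS X
  rw [dotProduct_Jmat_add_smul_one_mul_Amat_mulVec hS.ne', ge_iff_le,
    ← Real.sq_sqrt (sum_nonneg fun n _ => sq_nonneg (X n)), ← sq_abs (∑ n, X n)]
  calc δ * α / 2 * √(∑ n, X n ^ 2) ^ 2
      ≤ |∑ n, X n| ^ 2 + δ * (α * √(∑ n, X n ^ 2) ^ 2 - M * |∑ n, X n| * √(∑ n, X n ^ 2)) :=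
        mul_sq_le_sq_add_mul_sub hδ.1.le hδM _ _
    _ ≤ |∑ n, X n| ^ 2 + δ * (X ⬝ᵥ (Amat N f ε u *ᵥ X)) := by gcongr
end

section
/- Let ε > 0 and let u : ℝ → ℝ^N be differentiable at a point x₀ ∈ ℝ with ε + Σ_{l=1}^N f(l)u_l(x₀) > 0. Then, for each 1 ≤ n ≤ N, the function x ↦ B^ε_n(u(x))·u_n(x) is differentiable at x₀ and its derivative at x₀ equals Σ_{k=1}^N A^ε_{nk}(u(x₀))·u_k′(x₀); in other words, ∂_x[B^ε(u)u] = A^ε(u)∂_x u. -/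
open Finset Matrix

/-! Writing `B^ε_n(v) = P_n(v) / Q(v)` with `P_n(v) = ε + f(n) Σ v` and `Q(v) = ε + Σ f v`,
both diagonal and off-diagonal entries of `A^ε(v)` are `δ_{nk} B^ε_n(v)` plus
`v_n (f(n) Q(v) - f(k) P_n(v)) / Q(v)²`, the `k`-th partial derivative of `B^ε_n` times `v_n`.
The theorem is then the product rule for `B^ε_n(u) · u_n` and the quotient rule for `B^ε_n(u)`. -/

section

variable {N : ℕ} (f : Fin N → ℝ) (ε : ℝ)

theorem Amat_apply_eq (v : Fin N → ℝ) (n k : Fin N) :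
    Amat N f ε v n k = (if n = k then Bv N f ε v n else 0) +
      v n * (f n * (ε + ∑ l, f l * v l) - f k * (ε + f n * ∑ l, v l)) /
        (ε + ∑ l, f l * v l) ^ 2 := by
  have hsum : ∑ l, (f l - f k) * v l = ∑ l, f l * v l - f k * ∑ l, v l := by
    simp only [sub_mul, sum_sub_distrib, mul_sum]
  rcases eq_or_ne n k with rfl | h
  · simp only [Amat, of_apply, if_true, hsum]
    ring
  · simp only [Amat, of_apply, if_neg h, hsum]
    ring

theorem sum_Amat_mul (v w : Fin N → ℝ) (n : Fin N) :
    ∑ k, Amat N f ε v n k * w k = Bv N f ε v n * w n +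
      v n * (f n * (∑ k, w k) * (ε + ∑ l, f l * v l) -
        (ε + f n * ∑ l, v l) * ∑ k, f k * w k) / (ε + ∑ l, f l * v l) ^ 2 := by
  set Q := ε + ∑ l, f l * v l
  set P := ε + f n * ∑ l, v l
  have hterm : ∀ k, Amat N f ε v n k * w k = (if n = k then Bv N f ε v n * w k else 0) +
      v n * f n * Q / Q ^ 2 * w k - v n * P / Q ^ 2 * (f k * w k) := by
    intro k
    rw [Amat_apply_eq, ← ite_zero_mul]
    ring
  rw [sum_congr rfl fun k _ => hterm k, sum_sub_distrib, sum_add_distrib, sum_ite_eq,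
    if_pos (mem_univ n), ← mul_sum, ← mul_sum]
  ring

theorem hasDerivAt_Bv {u : ℝ → Fin N → ℝ} {u' : Fin N → ℝ} {x₀ : ℝ}
    (hu : ∀ n, HasDerivAt (fun x => u x n) (u' n) x₀) (hQ : ε + ∑ l, f l * u x₀ l ≠ 0)
    (n : Fin N) :
    HasDerivAt (fun x => Bv N f ε (u x) n)
      ((f n * (∑ k, u' k) * (ε + ∑ l, f l * u x₀ l) -
        (ε + f n * ∑ l, u x₀ l) * ∑ k, f k * u' k) / (ε + ∑ l, f l * u x₀ l) ^ 2) x₀ := by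
  have hP : HasDerivAt (fun x => ε + f n * ∑ l, u x l) (f n * ∑ k, u' k) x₀ :=
    ((HasDerivAt.fun_sum fun k _ => hu k).const_mul (f n)).const_add ε
  have hQ' : HasDerivAt (fun x => ε + ∑ l, f l * u x l) (∑ k, f k * u' k) x₀ :=
    (HasDerivAt.fun_sum fun k _ => (hu k).const_mul (f k)).const_add ε
  exact hP.div hQ' hQ

end

theorem hasDerivAt_B_mul_general (N : ℕ) (f : Fin N → ℝ)
    (ε : ℝ) (u : ℝ → Fin N → ℝ) (u' : Fin N → ℝ) (x₀ : ℝ)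
    (hu : ∀ n, HasDerivAt (fun x => u x n) (u' n) x₀)
    (hpos : 0 < ε + ∑ l, f l * u x₀ l) :
    ∀ n : Fin N,
      HasDerivAt (fun x => Bv N f ε (u x) n * u x n)
        (∑ k, Amat N f ε (u x₀) n k * u' k) x₀ := by
  intro n
  rw [sum_Amat_mul]
  exact ((hasDerivAt_Bv f ε hu hpos.ne' n).fun_mul (hu n)).congr_deriv (by ring)

/-- Chain rule identity `∂_x[B^ε(u)u] = A^ε(u) ∂_x u`: if `u : ℝ → ℝ^N` is differentiable at
`x₀` with derivative `u′` and `ε + Σ_l f(l)u_l(x₀) > 0`, then for each `n` the function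
`x ↦ B^ε_n(u(x)) u_n(x)` has derivative `Σ_k A^ε_{nk}(u(x₀)) u′_k` at `x₀`. -/
theorem hasDerivAt_B_mul (N : ℕ) (hN : 2 ≤ N) (f : Fin N → ℝ) (hf : ∀ n, 0 < f n)
    (ε : ℝ) (hε : 0 < ε) (u : ℝ → Fin N → ℝ) (u' : Fin N → ℝ) (x₀ : ℝ)
    (hu : ∀ n, HasDerivAt (fun x => u x n) (u' n) x₀)
    (hpos : 0 < ε + ∑ l, f l * u x₀ l) :
    ∀ n : Fin N,
      HasDerivAt (fun x => Bv N f ε (u x) n * u x n)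
        (∑ k, Amat N f ε (u x₀) n k * u' k) x₀ :=
  hasDerivAt_B_mul_general N f ε u u' x₀ hu hpos
end
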